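/- arXiv:1102.5315 — 4 statements merged into one kernel-verified Lean document; each statement's English description precedes it below -/
import Mathlib

section
/- Assume W : ℝ → ℝ is continuous and there exist M > 0 and α ∈ [0,2) with W(s) ≤ M|s|^α for all s ≥ 0. Then there exists a pair (u,v) ∈ X with C(u,v) = −∫ v u_x dx ≠ 0 and E(u,v) < |C(u,v)|; that is, Λ* := inf{ E(𝐮)/|C(𝐮)| : 𝐮 ∈ X, C(𝐮) ≠ 0 } < 1. -/
open MeasureTheory Filter Topology

noncomputable section

/-- `u ∈ H²(ℝ)`: `u` has everywhere first derivative `u'` and second derivative `u''`,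
with `u, u', u'' ∈ L²(ℝ)`. -/
def InH2 (u u' u'' : ℝ → ℝ) : Prop :=
  (∀ x, HasDerivAt u (u' x) x) ∧ (∀ x, HasDerivAt u' (u'' x) x) ∧
    MemLp u 2 ∧ MemLp u' 2 ∧ MemLp u'' 2

/-- `(u,v) ∈ X = H²(ℝ) × L²(ℝ)`. -/
def InX (u u' u'' v : ℝ → ℝ) : Prop :=
  InH2 u u' u'' ∧ MemLp v 2

/-- The squared `X`-norm `‖𝐮‖² = ∫ (v² + u_xx² + u²)`. -/
def normSq (u u'' v : ℝ → ℝ) : ℝ :=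
  ∫ x : ℝ, ((v x) ^ 2 + (u'' x) ^ 2 + (u x) ^ 2)

/-- The energy `E(𝐮) = ½∫(v² + u_xx²) + ∫ W(u)`. -/
def energy (W u u'' v : ℝ → ℝ) : ℝ :=
  (1 / 2) * (∫ x : ℝ, ((v x) ^ 2 + (u'' x) ^ 2)) + ∫ x : ℝ, W (u x)

/-- The momentum (hylenic charge) `C(𝐮) = −∫ v u_x`. -/
def momentum (u' v : ℝ → ℝ) : ℝ :=
  -∫ x : ℝ, v x * u' x

/-!
Take a bump `φ` and the travelling-wave ansatz `u(x) = R φ(x/l)`, `v = -u_x`, so that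
`C(u,v) = ∫ u_x² = R² A / l` with `A = ∫ φ'²`. The energy is
`½ (R² A / l + R² B / l³) + ∫ W(u)` with `B = ∫ φ''²`. A wide profile (`l² ≥ 2B/A`) makes the
`u_xx` term at most `C/4`; since `0 ≤ u ≤ R` on a support of length `O(l)`, `∫ W(u) = O(l R^α)`,
and `α < 2` lets a large amplitude `R` push this below `C/4` as well.
-/

namespace Hylomorphy

def rescale (R l : ℝ) (f : ℝ → ℝ) (x : ℝ) : ℝ :=
  R * f (x / l)

theorem hasDerivAt_rescale {f f' : ℝ → ℝ} (hf : ∀ y, HasDerivAt f (f' y) y) (R l x : ℝ) :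
    HasDerivAt (rescale R l f) (rescale (R / l) l f' x) x := by
  have := ((hf (x / l)).comp x ((hasDerivAt_id x).div_const l)).const_mul R
  exact this.congr_deriv (by simp only [rescale]; ring)

theorem memLp_rescale {f : ℝ → ℝ} (hf : Continuous f) (hfs : HasCompactSupport f) (R : ℝ)
    {l : ℝ} (hl : l ≠ 0) : MemLp (rescale R l f) 2 := by
  have heq : rescale R l f = (fun _ => R) * fun x => f (l⁻¹ • x) := by
    funext x
    simp [rescale, div_eq_inv_mul, mul_comm]
  have hsupp : HasCompactSupport (rescale R l f) :=
    heq ▸ (hfs.comp_smul (inv_ne_zero hl)).mul_left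
  exact (continuous_const.mul (hf.comp (continuous_id.div_const l))).memLp_of_hasCompactSupport
    hsupp

theorem integral_rescale_sq (R : ℝ) {l : ℝ} (hl : 0 < l) (f : ℝ → ℝ) :
    ∫ x, rescale R l f x ^ 2 = R ^ 2 * l * ∫ x, f x ^ 2 := by
  simp only [rescale, mul_pow]
  rw [integral_const_mul, Measure.integral_comp_div (fun y => f y ^ 2) l, abs_of_pos hl,
    smul_eq_mul, mul_assoc]

theorem inX_rescale {f : ℝ → ℝ} (hf : ContDiff ℝ 2 f) (hfs : HasCompactSupport f) (R : ℝ)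
    {l : ℝ} (hl : l ≠ 0) :
    InX (rescale R l f) (rescale (R / l) l (deriv f)) (rescale (R / l ^ 2) l (deriv (deriv f)))
      (-rescale (R / l) l (deriv f)) := by
  have hf' : ContDiff ℝ 1 (deriv f) := (contDiff_succ_iff_deriv.1 hf).2.2
  have hd : ∀ y, HasDerivAt f (deriv f y) y := fun y =>
    (hf.differentiable two_ne_zero y).hasDerivAt
  have hd' : ∀ y, HasDerivAt (deriv f) (deriv (deriv f) y) y := fun y =>
    (hf'.differentiable one_ne_zero y).hasDerivAt
  have hL2 := memLp_rescale hf'.continuous hfs.deriv (R / l) hl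
  refine ⟨⟨hasDerivAt_rescale hd R l, fun x => ?_, memLp_rescale hf.continuous hfs R hl, hL2,
    memLp_rescale hf'.continuous_deriv_one hfs.deriv.deriv _ hl⟩, hL2.neg⟩
  simpa [div_div, ← sq] using hasDerivAt_rescale hd' (R / l) l x

theorem momentum_neg_self (w : ℝ → ℝ) : momentum w (-w) = ∫ x, w x ^ 2 := by
  simp [momentum, ← integral_neg, sq]

theorem energy_neg {w u'' : ℝ → ℝ} (hw : MemLp w 2) (hu'' : MemLp u'' 2) (W u : ℝ → ℝ) :
    energy W u u'' (-w) = ((∫ x, w x ^ 2) + ∫ x, u'' x ^ 2) / 2 + ∫ x, W (u x) := by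
  simp only [energy, Pi.neg_apply, neg_sq]
  rw [integral_add hw.integrable_sq hu''.integrable_sq]
  ring

theorem integral_deriv_sq_pos {f : ℝ → ℝ} (hf : ContDiff ℝ 1 f) (hfs : HasCompactSupport f)
    {x y : ℝ} (hxy : f x ≠ f y) : 0 < ∫ z, deriv f z ^ 2 := by
  obtain ⟨z, hz⟩ : ∃ z, deriv f z ≠ 0 := by
    by_contra! h
    exact hxy (is_const_of_deriv_eq_zero (hf.differentiable one_ne_zero) h x y)
  have hint : Integrable fun z => deriv f z ^ 2 :=
    (hf.continuous_deriv_one.memLp_of_hasCompactSupport (μ := volume) (p := 2)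
      hfs.deriv).integrable_sq
  exact integral_pos_of_integrable_nonneg_nonzero (hf.continuous_deriv_one.pow 2) hint
    (fun z => sq_nonneg _) (pow_ne_zero 2 hz)

theorem integral_deriv_sq_pos_of_bump (φ : ContDiffBump (0 : ℝ)) :
    0 < ∫ x, deriv φ x ^ 2 := by
  refine integral_deriv_sq_pos φ.contDiff φ.hasCompactSupport (x := 0) (y := φ.rOut) ?_
  rw [φ.one_of_mem_closedBall (Metric.mem_closedBall_self φ.rIn_pos.le),
    φ.zero_of_le_dist (by simp [abs_of_pos φ.rOut_pos])]
  exact one_ne_zero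

/-- If `f` is integrable then `c = 0`, as `f = c` on a set of infinite measure; otherwise the
integral is the junk value `0`. -/
theorem integral_le_measureReal_mul {α : Type*} [MeasurableSpace α] {μ : Measure α}
    {f : α → ℝ} {s : Set α} {c K : ℝ} (hs : MeasurableSet s) (hμs : μ s ≠ ⊤)
    (hμsc : μ sᶜ = ⊤) (hK : 0 ≤ K) (hfs : ∀ x ∈ s, f x ≤ K) (hfsc : ∀ x ∉ s, f x = c) :
    ∫ x, f x ∂μ ≤ μ.real s * K := by
  by_cases hfi : Integrable f μ
  · have hc : c = 0 := by
      have : IntegrableOn (fun _ => c) sᶜ μ :=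
        (hfi.integrableOn (s := sᶜ)).congr_fun (fun x hx => hfsc x hx) hs.compl
      simpa [hμsc] using this
    calc ∫ x, f x ∂μ ≤ ∫ x, s.indicator (fun _ => K) x ∂μ := by
          refine integral_mono hfi ((integrable_indicator_iff hs).2 (integrableOn_const hμs)) ?_
          intro x
          by_cases hx : x ∈ s
          · simpa [hx] using hfs x hx
          · simp [hx, hfsc x hx, hc]
      _ = μ.real s * K := integral_indicator_const K hs
  · rw [integral_undef hfi]
    positivity

theorem integral_comp_rescale_le (φ : ContDiffBump (0 : ℝ)) {W : ℝ → ℝ} {M α R l : ℝ}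
    (hM : 0 ≤ M) (hα : 0 ≤ α) (hR : 0 ≤ R) (hl : 0 < l)
    (hW : ∀ s, 0 ≤ s → W s ≤ M * |s| ^ α) :
    ∫ x, W (rescale R l φ x) ≤ 2 * (φ.rOut * l) * (M * R ^ α) := by
  set s := Metric.closedBall (0 : ℝ) (φ.rOut * l)
  have hμs : volume s ≠ ⊤ := measure_closedBall_lt_top.ne
  have hμsc : volume sᶜ = ⊤ := by
    rw [measure_compl measurableSet_closedBall hμs, Real.volume_univ, ENNReal.top_sub hμs]
  have hbound : ∀ x ∈ s, W (rescale R l φ x) ≤ M * R ^ α := by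
    intro x _
    have h0 : 0 ≤ rescale R l φ x := mul_nonneg hR φ.nonneg
    have hle : rescale R l φ x ≤ R := mul_le_of_le_one_right hR φ.le_one
    calc W (rescale R l φ x) ≤ M * |rescale R l φ x| ^ α := hW _ h0
      _ ≤ M * R ^ α := by
        rw [abs_of_nonneg h0]
        gcongr
  have hvanish : ∀ x ∉ s, W (rescale R l φ x) = W 0 := by
    intro x hx
    have hx' : φ.rOut ≤ dist (x / l) 0 := by
      rw [Metric.mem_closedBall, not_le] at hx
      rw [dist_zero_right, Real.norm_eq_abs, abs_div, abs_of_pos hl, le_div_iff₀ hl]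
      simpa using hx.le
    simp [rescale, φ.zero_of_le_dist hx']
  calc ∫ x, W (rescale R l φ x)
      ≤ volume.real s * (M * R ^ α) :=
        integral_le_measureReal_mul measurableSet_closedBall hμs hμsc (by positivity) hbound
          hvanish
    _ = 2 * (φ.rOut * l) * (M * R ^ α) := by
        rw [Real.volume_real_closedBall (by have := φ.rOut_pos; positivity)]

theorem exists_pos_mul_rpow_lt_mul_sq {α : ℝ} (hα : α < 2) (K : ℝ) {A : ℝ} (hA : 0 < A) :
    ∃ R > 0, K * R ^ α < A * R ^ 2 := by
  obtain ⟨R, hRK, hR⟩ := (((tendsto_rpow_atTop (sub_pos.2 hα)).eventually_gt_atTop (K / A)).and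
    (eventually_gt_atTop 0)).exists
  refine ⟨R, hR, ?_⟩
  have hsplit : R ^ 2 = R ^ (2 - α) * R ^ α := by
    rw [← Real.rpow_add hR, sub_add_cancel, Real.rpow_two]
  rw [hsplit, ← mul_assoc]
  exact mul_lt_mul_of_pos_right ((div_lt_iff₀' hA).1 hRK) (Real.rpow_pos_of_pos hR α)

theorem rescaled_energy_lt_momentum {A B K l r R : ℝ} (hA : 0 < A) (hl : 0 < l)
    (hlB : 2 * B / A ≤ l ^ 2) (hK : 8 * r * l ^ 2 * K < A * R ^ 2) :
    ((R / l) ^ 2 * l * A + (R / l ^ 2) ^ 2 * l * B) / 2 + 2 * (r * l) * K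
      < (R / l) ^ 2 * l * A := by
  have hB : (R / l ^ 2) ^ 2 * l * B ≤ (R / l) ^ 2 * l * A / 2 := by
    have : B / l ^ 2 ≤ A / 2 := by
      rw [div_le_iff₀ hA] at hlB
      rw [div_le_iff₀ (by positivity)]
      linarith
    calc (R / l ^ 2) ^ 2 * l * B = (R / l) ^ 2 * l * (B / l ^ 2) := by field_simp
      _ ≤ (R / l) ^ 2 * l * (A / 2) := by gcongr
      _ = _ := by ring
  have hK' : 2 * (r * l) * K < (R / l) ^ 2 * l * A / 4 := by
    have : (R / l) ^ 2 * l * A / 4 = A * R ^ 2 / (4 * l) := by field_simp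
    rw [this, lt_div_iff₀ (by positivity)]
    linarith
  linarith

end Hylomorphy

open Hylomorphy

theorem hylomorphy_lambda_star_lt_one_general (W : ℝ → ℝ)
    (hWiii : ∃ M : ℝ, 0 < M ∧ ∃ α : ℝ, α ∈ Set.Ico (0 : ℝ) 2 ∧
      ∀ s : ℝ, 0 ≤ s → W s ≤ M * |s| ^ α) :
    ∃ u u' u'' v : ℝ → ℝ, InX u u' u'' v ∧
      momentum u' v ≠ 0 ∧ energy W u u'' v < |momentum u' v| := by
  obtain ⟨M, hM, α, ⟨hα0, hα2⟩, hW⟩ := hWiii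
  let φ : ContDiffBump (0 : ℝ) := default
  set A := ∫ x, deriv φ x ^ 2
  set B := ∫ x, deriv (deriv φ) x ^ 2
  have hA : 0 < A := integral_deriv_sq_pos_of_bump φ
  obtain ⟨l, hlB, hl⟩ := (((tendsto_pow_atTop two_ne_zero).eventually_ge_atTop (2 * B / A)).and
    (eventually_gt_atTop 0)).exists
  obtain ⟨R, hR, hRα⟩ := exists_pos_mul_rpow_lt_mul_sq hα2 (8 * φ.rOut * l ^ 2 * M) hA
  have hX := inX_rescale φ.contDiff φ.hasCompactSupport R hl.ne'
  have ⟨⟨_, _, _, hu', hu''⟩, _⟩ := hX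
  have hC : 0 < (R / l) ^ 2 * l * A := by positivity
  refine ⟨_, _, _, _, hX, ?_⟩
  rw [momentum_neg_self, integral_rescale_sq _ hl, abs_of_pos hC,
    energy_neg hu' hu'', integral_rescale_sq _ hl, integral_rescale_sq _ hl]
  refine ⟨hC.ne', (add_le_add_right (integral_comp_rescale_le φ hM.le hα0 hR.le hl hW) _).trans_lt
    (rescaled_energy_lt_momentum hA hl hlB (by rwa [← mul_assoc]))⟩

/-- Hylomorphy (Lemma 7): if `W` is continuous and `W(s) ≤ M|s|^α` for all `s ≥ 0`,
for some `M > 0` and `α ∈ [0,2)`, then there is `𝐮 = (u,v) ∈ X` with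
`C(𝐮) ≠ 0` and `E(𝐮) < |C(𝐮)|`; i.e. `Λ* < 1`. -/
theorem hylomorphy_lambda_star_lt_one (W : ℝ → ℝ) (hW : Continuous W)
    (hWiii : ∃ M : ℝ, 0 < M ∧ ∃ α : ℝ, α ∈ Set.Ico (0 : ℝ) 2 ∧
      ∀ s : ℝ, 0 ≤ s → W s ≤ M * |s| ^ α) :
    ∃ u u' u'' v : ℝ → ℝ, InX u u' u'' v ∧
      momentum u' v ≠ 0 ∧ energy W u u'' v < |momentum u' v| :=
  hylomorphy_lambda_star_lt_one_general W hWiii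
end
end

section
/- Assume W : ℝ → ℝ is nonnegative and satisfies (W-i): there exists η > 0 with W(s) ≥ η s² for |s| ≤ 1 and W(s) ≥ η for |s| ≥ 1. Then for every M > 0 there exists a constant C > 0 such that every 𝐮 = (u,v) ∈ X with E(𝐮) ≤ M satisfies ‖𝐮‖ ≤ C, i.e., sublevel sets of the energy are bounded in X. -/
open MeasureTheory Filter Topology

noncomputable section

/-!
The energy bound controls `∫ v²` and `∫ u''²` directly, and by (W-i) it controls
`∫ min (u², 1)`. Since `u² ≤ min (u², 1) · (1 + ‖u‖∞²)`, it remains to bound `‖u‖∞` by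
`∫ u²` sublinearly: Agmon's inequality `‖u‖∞² ≤ 2‖u‖₂‖u'‖₂` together with the interpolation
`‖u'‖₂² = -∫ u u'' ≤ ‖u‖₂‖u''‖₂` gives `‖u‖∞² ≲ (∫ u²)^(3/4) (∫ u''²)^(1/4)`. Both inequalities
are used in AM-GM form with a free parameter, which keeps the final step polynomial.
-/

lemma mul_min_sq_one_le {W : ℝ → ℝ} {η : ℝ} (hW₁ : ∀ s : ℝ, |s| ≤ 1 → η * s ^ 2 ≤ W s)
    (hW₂ : ∀ s : ℝ, 1 ≤ |s| → η ≤ W s) (s : ℝ) : η * min (s ^ 2) 1 ≤ W s := by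
  rcases le_total |s| 1 with h | h
  · rw [min_eq_left (by nlinarith [sq_abs s, abs_nonneg s])]
    exact hW₁ s h
  · rw [min_eq_right (by nlinarith [sq_abs s]), mul_one]
    exact hW₂ s h

lemma neg_two_mul_mul_le (t a b : ℝ) : -(2 * t * a * b) ≤ t ^ 2 * a ^ 2 + b ^ 2 := by
  nlinarith [sq_nonneg (t * a + b)]

/-- Take `t = 1 / (4 * A)` and `s = 1 / (8 * A ^ 2)`. -/
lemma le_of_forall_interpolation {A p q r : ℝ} (hA : 0 < A)
    (hp : ∀ t, 0 ≤ t → t * p ≤ (t + (t ^ 2 * p + q)) * A)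
    (hq : ∀ s, 2 * s * q ≤ s ^ 2 * p + r) :
    p ≤ 2 * A + 32 * A ^ 4 * r := by
  have h₁ := hp (1 / (4 * A)) (by positivity)
  have h₂ := hq (1 / (8 * A ^ 2))
  have e₁ : 3 * p ≤ 4 * A + 16 * A ^ 2 * q := by
    field_simp at h₁
    nlinarith
  have e₂ : 16 * A ^ 2 * q ≤ p + 64 * A ^ 4 * r := by
    field_simp at h₂
    nlinarith
  linarith

section SecondOrderSobolev

variable {f f' f'' : ℝ → ℝ}

/-- Agmon's inequality `‖f‖∞² ≤ 2‖f‖₂‖f'‖₂` in AM-GM form, from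
`f x ^ 2 = -∫ y in Ioi x, (f ^ 2)' y`. -/
lemma mul_sq_le_integral_sq_add_integral_deriv_sq (hf : ∀ x, HasDerivAt f (f' x) x)
    (hfL : MemLp f 2) (hf'L : MemLp f' 2) (t x : ℝ) :
    t * f x ^ 2 ≤ t ^ 2 * (∫ y, f y ^ 2) + ∫ y, f' y ^ 2 := by
  have hsq : ∀ y, HasDerivAt (fun y => f y ^ 2) (2 * f y * f' y) y := fun y =>
    ((hf y).fun_pow 2).congr_deriv (by ring)
  have hint : Integrable (fun y => 2 * f y * f' y) := by
    simpa [mul_assoc] using (hfL.integrable_mul hf'L).const_mul 2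
  have hlim : Tendsto (fun y => f y ^ 2) atTop (𝓝 0) :=
    tendsto_zero_of_hasDerivAt_of_integrableOn_Ioi (a := x) (fun y _ => hsq y)
      hint.integrableOn hfL.integrable_sq.integrableOn
  have hbound : Integrable (fun y => t ^ 2 * f y ^ 2 + f' y ^ 2) :=
    (hfL.integrable_sq.const_mul _).add hf'L.integrable_sq
  calc t * f x ^ 2 = ∫ y in Set.Ioi x, -(t * (2 * f y * f' y)) := by
        rw [integral_neg, integral_const_mul,
          integral_Ioi_of_hasDerivAt_of_tendsto' (fun y _ => hsq y) hint.integrableOn hlim]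
        ring
    _ ≤ ∫ y in Set.Ioi x, (t ^ 2 * f y ^ 2 + f' y ^ 2) :=
        setIntegral_mono (hint.const_mul t).neg.integrableOn hbound.integrableOn
          fun y => by linarith [neg_two_mul_mul_le t (f y) (f' y)]
    _ ≤ ∫ y, (t ^ 2 * f y ^ 2 + f' y ^ 2) :=
        setIntegral_le_integral hbound (.of_forall fun y => by positivity)
    _ = t ^ 2 * (∫ y, f y ^ 2) + ∫ y, f' y ^ 2 := by
        rw [integral_add (hfL.integrable_sq.const_mul _) hf'L.integrable_sq, integral_const_mul]

lemma two_mul_mul_integral_deriv_sq_le (hf : ∀ x, HasDerivAt f (f' x) x)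
    (hf' : ∀ x, HasDerivAt f' (f'' x) x) (hfL : MemLp f 2) (hf'L : MemLp f' 2)
    (hf''L : MemLp f'' 2) (s : ℝ) :
    2 * s * ∫ x, f' x ^ 2 ≤ s ^ 2 * (∫ x, f x ^ 2) + ∫ x, f'' x ^ 2 := by
  have hff'' : Integrable (fun x => f x * f'' x) := hfL.integrable_mul hf''L
  have hbound : Integrable (fun x => s ^ 2 * f x ^ 2 + f'' x ^ 2) :=
    (hfL.integrable_sq.const_mul _).add hf''L.integrable_sq
  have hparts : ∫ x, f x * f'' x = -∫ x, f' x ^ 2 := by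
    simpa only [sq] using integral_mul_deriv_eq_deriv_mul_of_integrable (fun x _ => hf x)
      (fun x _ => hf' x) hff'' (hf'L.integrable_mul hf'L) (hfL.integrable_mul hf'L)
  calc 2 * s * ∫ x, f' x ^ 2 = ∫ x, -(s * (2 * (f x * f'' x))) := by
        rw [integral_neg, integral_const_mul, integral_const_mul, hparts]
        ring
    _ ≤ ∫ x, (s ^ 2 * f x ^ 2 + f'' x ^ 2) :=
        integral_mono ((hff''.const_mul 2).const_mul s).neg hbound
          fun x => by linarith [neg_two_mul_mul_le s (f x) (f'' x)]
    _ = s ^ 2 * (∫ x, f x ^ 2) + ∫ x, f'' x ^ 2 := by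
        rw [integral_add (hfL.integrable_sq.const_mul _) hf''L.integrable_sq, integral_const_mul]

lemma integrable_min_sq_one (hfL : MemLp f 2) : Integrable (fun x => min (f x ^ 2) 1) :=
  hfL.integrable_sq.mono' ((hfL.1.pow 2).inf aestronglyMeasurable_const)
    (.of_forall fun x => by
      rw [Real.norm_of_nonneg (le_min (sq_nonneg _) zero_le_one)]
      exact min_le_left _ _)

lemma mul_integral_sq_le_of_mul_sq_le (hfL : MemLp f 2) {t K : ℝ} (ht : 0 ≤ t)
    (hK : ∀ x, t * f x ^ 2 ≤ K) :
    t * ∫ x, f x ^ 2 ≤ (t + K) * ∫ x, min (f x ^ 2) 1 := by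
  rw [← integral_const_mul, ← integral_const_mul]
  refine integral_mono (hfL.integrable_sq.const_mul t)
    ((integrable_min_sq_one hfL).const_mul _) fun x => ?_
  have hK0 : 0 ≤ K := (mul_nonneg ht (sq_nonneg _)).trans (hK x)
  rcases le_total (f x ^ 2) 1 with h | h
  · rw [min_eq_left h]
    nlinarith [sq_nonneg (f x)]
  · rw [min_eq_right h]
    linarith [hK x]

lemma integral_sq_le_of_integral_min_sq_one_le (hf : ∀ x, HasDerivAt f (f' x) x)
    (hf' : ∀ x, HasDerivAt f' (f'' x) x) (hfL : MemLp f 2) (hf'L : MemLp f' 2)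
    (hf''L : MemLp f'' 2) {A : ℝ} (hA : 0 < A) (hmin : ∫ x, min (f x ^ 2) 1 ≤ A) :
    ∫ x, f x ^ 2 ≤ 2 * A + 32 * A ^ 4 * ∫ x, f'' x ^ 2 := by
  refine le_of_forall_interpolation hA (fun t ht => ?_)
    (two_mul_mul_integral_deriv_sq_le hf hf' hfL hf'L hf''L)
  have hsup := mul_sq_le_integral_sq_add_integral_deriv_sq hf hfL hf'L t
  have hK : 0 ≤ t + (t ^ 2 * (∫ x, f x ^ 2) + ∫ x, f' x ^ 2) := by positivity
  exact (mul_integral_sq_le_of_mul_sq_le hfL ht hsup).trans (mul_le_mul_of_nonneg_left hmin hK)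

end SecondOrderSobolev

theorem energy_sublevels_bounded_general (W : ℝ → ℝ)
    (hWi : ∃ η : ℝ, 0 < η ∧ (∀ s : ℝ, |s| ≤ 1 → η * s ^ 2 ≤ W s) ∧
      (∀ s : ℝ, 1 ≤ |s| → η ≤ W s))
    (M : ℝ) (hM : 0 < M) :
    ∃ C : ℝ, 0 < C ∧ ∀ u u' u'' v : ℝ → ℝ, InX u u' u'' v →
      Integrable (fun x => W (u x)) →
      energy W u u'' v ≤ M → Real.sqrt (normSq u u'' v) ≤ C := by
  obtain ⟨η, hη, hW₁, hW₂⟩ := hWi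
  have hA : 0 < M / η := div_pos hM hη
  refine ⟨√(2 * M + (2 * (M / η) + 32 * (M / η) ^ 4 * (2 * M))), by positivity, ?_⟩
  rintro u u' u'' v ⟨⟨hu, hu', huL, hu'L, hu''L⟩, hvL⟩ hWu hE
  have hpot : η * ∫ x, min (u x ^ 2) 1 ≤ ∫ x, W (u x) := by
    rw [← integral_const_mul]
    exact integral_mono ((integrable_min_sq_one huL).const_mul η) hWu
      fun x => mul_min_sq_one_le hW₁ hW₂ (u x)
  have hpot₀ : 0 ≤ η * ∫ x, min (u x ^ 2) 1 := by positivity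
  have hv₀ : 0 ≤ ∫ x, v x ^ 2 := by positivity
  have hu''₀ : 0 ≤ ∫ x, u'' x ^ 2 := by positivity
  rw [energy, integral_add hvL.integrable_sq hu''L.integrable_sq] at hE
  have hmin : ∫ x, min (u x ^ 2) 1 ≤ M / η := by
    rw [le_div_iff₀' hη]
    linarith
  have hu'' : ∫ x, u'' x ^ 2 ≤ 2 * M := by linarith
  have hL2 := integral_sq_le_of_integral_min_sq_one_le hu hu' huL hu'L hu''L hA hmin
  rw [normSq, integral_add (f := fun x => v x ^ 2 + u'' x ^ 2)
    (hvL.integrable_sq.add hu''L.integrable_sq) huL.integrable_sq,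
    integral_add hvL.integrable_sq hu''L.integrable_sq]
  refine Real.sqrt_le_sqrt ?_
  linarith [mul_le_mul_of_nonneg_left hu'' (by positivity : (0 : ℝ) ≤ 32 * (M / η) ^ 4)]

/-- Lemma 4: if `W ≥ 0` satisfies (W-i), then for every `M > 0` there is `C > 0` such
that every finite-energy state `𝐮 = (u,v) ∈ X` with `E(𝐮) ≤ M` satisfies `‖𝐮‖ ≤ C`. -/
theorem energy_sublevels_bounded (W : ℝ → ℝ) (hWpos : ∀ s, 0 ≤ W s)
    (hWi : ∃ η : ℝ, 0 < η ∧ (∀ s : ℝ, |s| ≤ 1 → η * s ^ 2 ≤ W s) ∧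
      (∀ s : ℝ, 1 ≤ |s| → η ≤ W s))
    (M : ℝ) (hM : 0 < M) :
    ∃ C : ℝ, 0 < C ∧ ∀ u u' u'' v : ℝ → ℝ, InX u u' u'' v →
      Integrable (fun x => W (u x)) →
      energy W u u'' v ≤ M → Real.sqrt (normSq u u'' v) ≤ C :=
  energy_sublevels_bounded_general W hWi M hM
end
end

section
/- Let M, η > 0 and let u ∈ H²(ℝ). Set Ω⁺ = {x ∈ ℝ : u(x) > 1}. If ∫_ℝ (u_xx)² dx ≤ M and the Lebesgue measure of Ω⁺ satisfies |Ω⁺| ≤ M/η, then there exists a constant R depending only on M and η (not on u) such that ∫_{Ω⁺} u² dx ≤ R. -/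
/-!
Let `a < x < b` with `(a, b)` the component of `Ω⁺ = {u > 1}` containing `x`; it has length at
most `|Ω⁺|`, and `u ≤ 1` at its ends. So `u` has an interior maximum on `[a, b]`, where `u'`
vanishes, and therefore, by `|t| ≤ (1 + t²) / 2`, `|u'| ≤ ∫_a^b |u''| ≤ (b - a + ∫ u''²) / 2`
on `[a, b]`. The mean value theorem gives `u x - 1 ≤ |Ω⁺| (|Ω⁺| + M) / 2`, a bound on `u` over
`Ω⁺` depending only on `M` and `|Ω⁺| ≤ M / η`; integrating its square over `Ω⁺` gives `R`.
-/

open MeasureTheory Set Interval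

theorem IsOpen.exists_Ioo_subset_endpoints_notMem {α : Type*}
    [ConditionallyCompleteLinearOrder α] [TopologicalSpace α] [OrderTopology α] {U : Set α}
    (hU : IsOpen U) {x : α} (hx : x ∈ U) (hl : ¬Iic x ⊆ U) (hr : ¬Ici x ⊆ U) :
    ∃ a b, x ∈ Ioo a b ∧ Ioo a b ⊆ U ∧ a ∉ U ∧ b ∉ U := by
  have hLne : (Uᶜ ∩ Iic x).Nonempty := by rwa [inter_comm, ← sdiff_eq, sdiff_nonempty]
  have hRne : (Uᶜ ∩ Ici x).Nonempty := by rwa [inter_comm, ← sdiff_eq, sdiff_nonempty]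
  have hLbdd : BddAbove (Uᶜ ∩ Iic x) := ⟨x, fun _ hy => hy.2⟩
  have hRbdd : BddBelow (Uᶜ ∩ Ici x) := ⟨x, fun _ hy => hy.2⟩
  obtain ⟨haU, hax⟩ := (hU.isClosed_compl.inter isClosed_Iic).csSup_mem hLne hLbdd
  obtain ⟨hbU, hxb⟩ := (hU.isClosed_compl.inter isClosed_Ici).csInf_mem hRne hRbdd
  refine ⟨_, _, ⟨lt_of_le_of_ne hax ?_, lt_of_le_of_ne hxb ?_⟩, fun y hy => ?_, haU, hbU⟩
  · exact fun h => haU (by rwa [h])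
  · exact fun h => hbU (by rwa [← h])
  · by_contra hyU
    rcases le_total y x with hyx | hxy
    · exact hy.1.not_ge (le_csSup hLbdd ⟨hyU, hyx⟩)
    · exact hy.2.not_ge (csInf_le hRbdd ⟨hyU, hxy⟩)

theorem setIntegral_abs_le_of_memLp_two {α : Type*} [MeasurableSpace α] {μ : Measure α}
    {s : Set α} (hs : μ s ≠ ⊤) {g : α → ℝ} (hg : MemLp g 2 μ) :
    ∫ x in s, |g x| ∂μ ≤ (μ.real s + ∫ x, g x ^ 2 ∂μ) / 2 := by
  have hg2 : Integrable (fun x => g x ^ 2) μ := hg.integrable_sq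
  have h1 : IntegrableOn (fun _ => (1 : ℝ)) s μ := integrableOn_const hs
  calc ∫ x in s, |g x| ∂μ ≤ ∫ x in s, (1 + g x ^ 2) / 2 ∂μ := by
        refine integral_mono_of_nonneg (ae_of_all _ fun x => abs_nonneg _)
          ((h1.add hg2.integrableOn).div_const 2) (ae_of_all _ fun x => ?_)
        nlinarith [sq_abs (g x), sq_nonneg (|g x| - 1)]
    _ = (μ.real s + ∫ x in s, g x ^ 2 ∂μ) / 2 := by
        rw [integral_div, integral_add h1 hg2.integrableOn, setIntegral_const, smul_eq_mul,
          mul_one]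
    _ ≤ (μ.real s + ∫ x, g x ^ 2 ∂μ) / 2 := by
        gcongr (_ + ?_) / 2
        exact setIntegral_le_integral hg2 (ae_of_all _ fun x => sq_nonneg (g x))

theorem abs_sub_le_of_hasDerivAt_of_memLp_two {f f' : ℝ → ℝ}
    (hf : ∀ x, HasDerivAt f (f' x) x) (hf' : MemLp f' 2) (a b : ℝ) :
    |f b - f a| ≤ (|b - a| + ∫ x, f' x ^ 2) / 2 := by
  have hint : IntervalIntegrable f' volume a b :=
    ((hf'.locallyIntegrable (by norm_num)).integrableOn_isCompact
      isCompact_uIcc).intervalIntegrable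
  rw [← intervalIntegral.integral_eq_sub_of_hasDerivAt (fun x _ => hf x) hint]
  calc |∫ x in a..b, f' x| ≤ ∫ x in Ι a b, |f' x| := by
        simpa only [Real.norm_eq_abs] using
          intervalIntegral.norm_integral_le_integral_norm_uIoc (f := f')
    _ ≤ (volume.real (Ι a b) + ∫ x, f' x ^ 2) / 2 :=
        setIntegral_abs_le_of_memLp_two (by simp) hf'
    _ = (|b - a| + ∫ x, f' x ^ 2) / 2 := by simp [Measure.real]

theorem exists_hasDerivAt_eq_zero_of_endpoints_lt {f f' : ℝ → ℝ}
    (hf : ∀ x, HasDerivAt f (f' x) x) {a b x : ℝ} (hx : x ∈ Icc a b) (ha : f a < f x)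
    (hb : f b < f x) : ∃ c ∈ Ioo a b, f' c = 0 := by
  have hcont : Continuous f := continuous_iff_continuousAt.2 fun y => (hf y).continuousAt
  have hends : ∀ y ∈ Icc a b \ Ioo a b, f y < f x := by
    rintro y ⟨hy, hy'⟩
    rcases eq_endpoints_or_mem_Ioo_of_mem_Icc hy with rfl | rfl | h
    exacts [ha, hb, (hy' h).elim]
  obtain ⟨c, hc, hmax⟩ := isCompact_Icc.exists_isLocalMax_mem_open Ioo_subset_Icc_self
    hcont.continuousOn hx hends isOpen_Ioo
  exact ⟨c, hc, hmax.hasDerivAt_eq_zero (hf c)⟩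

theorem sub_le_of_endpoints_lt_of_memLp_two {f f' f'' : ℝ → ℝ}
    (hf : ∀ x, HasDerivAt f (f' x) x) (hf' : ∀ x, HasDerivAt f' (f'' x) x) (hf'' : MemLp f'' 2)
    {a b x : ℝ} (hx : x ∈ Icc a b) (ha : f a < f x) (hb : f b < f x) :
    f x - f a ≤ (b - a) * ((b - a + ∫ y, f'' y ^ 2) / 2) := by
  obtain ⟨c, hc, hc0⟩ := exists_hasDerivAt_eq_zero_of_endpoints_lt hf hx ha hb
  have hbound : ∀ y ∈ Ico a b, ‖f' y‖ ≤ (b - a + ∫ y, f'' y ^ 2) / 2 := by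
    intro y hy
    have h := abs_sub_le_of_hasDerivAt_of_memLp_two hf' hf'' c y
    rw [hc0, sub_zero] at h
    refine (Real.norm_eq_abs _ ▸ h).trans ?_
    gcongr
    rw [abs_le]
    constructor <;> linarith [hy.1, hy.2, hc.1, hc.2]
  have hC : 0 ≤ (b - a + ∫ y, f'' y ^ 2) / 2 :=
    (norm_nonneg _).trans (hbound a ⟨le_rfl, hc.1.trans hc.2⟩)
  calc f x - f a ≤ ‖f x - f a‖ := Real.le_norm_self _
    _ ≤ (b - a + ∫ y, f'' y ^ 2) / 2 * (x - a) :=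
        norm_image_sub_le_of_norm_deriv_le_segment' (fun y _ => (hf y).hasDerivWithinAt)
          hbound x hx
    _ ≤ (b - a) * ((b - a + ∫ y, f'' y ^ 2) / 2) := by
        rw [mul_comm]
        gcongr
        exact hx.2

theorem le_add_of_mem_superlevel_of_memLp_two {u u' u'' : ℝ → ℝ}
    (hu : ∀ x, HasDerivAt u (u' x) x) (hu' : ∀ x, HasDerivAt u' (u'' x) x)
    (hu'' : MemLp u'' 2) {c : ℝ} (hΩ : volume {x | c < u x} ≠ ⊤) {x : ℝ} (hx : c < u x) :
    u x ≤ c + volume.real {x | c < u x} *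
      ((volume.real {x | c < u x} + ∫ y, u'' y ^ 2) / 2) := by
  have hopen : IsOpen {x | c < u x} :=
    isOpen_lt continuous_const (continuous_iff_continuousAt.2 fun y => (hu y).continuousAt)
  obtain ⟨a, b, hxab, hsub, haU, hbU⟩ := hopen.exists_Ioo_subset_endpoints_notMem hx
    (fun h => (measure_mono h).not_gt (Real.volume_Iic ▸ hΩ.lt_top))
    (fun h => (measure_mono h).not_gt (Real.volume_Ici ▸ hΩ.lt_top))
  have hab : b - a ≤ volume.real {x | c < u x} := by
    simpa only [Real.volume_real_Ioo_of_le (hxab.1.trans hxab.2).le] using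
      measureReal_mono hsub hΩ
  have ha : u a ≤ c := not_lt.1 haU
  have hb : u b ≤ c := not_lt.1 hbU
  have h := sub_le_of_endpoints_lt_of_memLp_two hu hu' hu'' (Ioo_subset_Icc_self hxab)
    (by linarith) (by linarith)
  have hmono : (b - a) * ((b - a + ∫ y, u'' y ^ 2) / 2) ≤
      volume.real {x | c < u x} * ((volume.real {x | c < u x} + ∫ y, u'' y ^ 2) / 2) := by
    have : 0 ≤ b - a := by linarith [hxab.1, hxab.2]
    gcongr
  linarith

/-- The key estimate (lalla) in Lemma 4: let `M, η > 0` and `u ∈ H²(ℝ)`, and set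
`Ω⁺ = {x | u x > 1}`.  If `∫ (u_xx)² ≤ M` and `|Ω⁺| ≤ M/η`, then there is a constant
`R = R(M,η)`, independent of `u`, with `∫_{Ω⁺} u² ≤ R`. -/
theorem sq_integral_on_superlevel_bounded (M η : ℝ) (hM : 0 < M) (hη : 0 < η) :
    ∃ R : ℝ, ∀ u u' u'' : ℝ → ℝ,
      (∀ x, HasDerivAt u (u' x) x) → (∀ x, HasDerivAt u' (u'' x) x) →
      MemLp u 2 → MemLp u' 2 → MemLp u'' 2 →
      (∫ x : ℝ, (u'' x) ^ 2) ≤ M →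
      volume {x : ℝ | 1 < u x} ≤ ENNReal.ofReal (M / η) →
      (∫ x in {x : ℝ | 1 < u x}, (u x) ^ 2) ≤ R := by
  set L := M / η
  refine ⟨L * (1 + L * ((L + M) / 2)) ^ 2, fun u u' u'' hu hu' _ _ hu'' hMint hvol => ?_⟩
  have hL : 0 ≤ L := by positivity
  have hΩ : volume {x | 1 < u x} < ⊤ := hvol.trans_lt ENNReal.ofReal_lt_top
  have hΩL : volume.real {x | 1 < u x} ≤ L := ENNReal.toReal_le_of_le_ofReal hL hvol
  have hbound : ∀ x ∈ {x | 1 < u x}, ‖u x ^ 2‖ ≤ (1 + L * ((L + M) / 2)) ^ 2 := by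
    intro x (hx : 1 < u x)
    have h := le_add_of_mem_superlevel_of_memLp_two hu hu' hu'' hΩ.ne hx
    have : 0 ≤ ∫ y, u'' y ^ 2 := integral_nonneg fun y => sq_nonneg _
    rw [Real.norm_eq_abs, abs_of_nonneg (sq_nonneg _)]
    gcongr
    exact h.trans (by gcongr)
  calc ∫ x in {x | 1 < u x}, u x ^ 2 ≤ ‖∫ x in {x | 1 < u x}, u x ^ 2‖ := Real.le_norm_self _
    _ ≤ (1 + L * ((L + M) / 2)) ^ 2 * volume.real {x | 1 < u x} :=
        norm_setIntegral_le_of_norm_le_const hΩ hbound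
    _ ≤ L * (1 + L * ((L + M) / 2)) ^ 2 := by
        rw [mul_comm]
        gcongr
end

section
/- Assume W ∈ C¹(ℝ), W(s) = ½s² + N(s) with N(s) = o(s²) as s → 0, and W satisfies (W-i) (so sublevel sets of E are bounded in X). Let 𝐮 ∈ X and let 𝐰_n be a sequence in X converging weakly to 0. Then E(𝐮 + 𝐰_n) − E(𝐮) − E(𝐰_n) → 0 and C(𝐮 + 𝐰_n) − C(𝐮) − C(𝐰_n) → 0 as n → ∞. -/
open MeasureTheory Filter Topology

noncomputable section

/-!
The quadratic parts of `E` and `C` are bilinear, so their splitting defects are the cross terms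
`∫ zₙ v`, `∫ wₙ'' u''`, `∫ wₙ u`, `∫ wₙ' v`, `∫ zₙ u'`, which vanish by weak convergence. What is
left is `∫ N(u + wₙ) - N(u) - N(wₙ)` with `N(s) = W(s) - s²/2`. By Banach–Steinhaus `wₙ` is bounded
in `H¹`, hence uniformly bounded, and `wₙ → 0` pointwise because
`wₙ(x) = ∫_{t > x} (wₙ - wₙ')(t) e^{x-t} dt` pairs `wₙ` and `wₙ'` with a fixed `L²` function.
On the finite-measure set `{|u| > η}` dominated convergence applies. On `{|u| ≤ η}`, `N(s) = o(s²)`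
and the Lipschitz bound for `N` give `|N(u + w) - N(u) - N(w)| ≤ ε (u² + w²) + M u²`, and
`∫_{|u| ≤ η} u² → 0` as `η → 0`.
-/

open Set

theorem tendsto_nhds_zero_of_eventually_abs_le_mul {ι : Type*} {l : Filter ι} {x : ι → ℝ}
    (C : ℝ) (h : ∀ ε > 0, ∀ᶠ i in l, |x i| ≤ C * ε) : Tendsto x l (𝓝 0) := by
  rw [Metric.tendsto_nhds]
  intro ε hε
  have hC : 0 < |C| + 1 := by positivity
  filter_upwards [h (ε / (|C| + 1)) (by positivity)] with i hi
  rw [Real.dist_eq, sub_zero]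
  calc |x i| ≤ C * (ε / (|C| + 1)) := hi
    _ ≤ |C| * (ε / (|C| + 1)) := by gcongr; exact le_abs_self C
    _ < ε := by rw [mul_div_assoc', div_lt_iff₀ hC]; nlinarith

theorem mul_le_mul_sq_add_sq_div {x y ε : ℝ} (hε : 0 < ε) :
    x * y ≤ ε * y ^ 2 + x ^ 2 / (4 * ε) := by
  have : ε * y ^ 2 + x ^ 2 / (4 * ε) - x * y = (2 * ε * y - x) ^ 2 / (4 * ε) := by
    field_simp; ring
  linarith [show 0 ≤ (2 * ε * y - x) ^ 2 / (4 * ε) by positivity]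

theorem exists_abs_le_mul_sq_of_isLittleO {N : ℝ → ℝ} (hN : N =o[𝓝 0] fun s => s ^ 2)
    {c : ℝ} (hc : 0 < c) : ∃ δ > 0, ∀ s, |s| ≤ δ → |N s| ≤ c * s ^ 2 := by
  obtain ⟨r, hr, hball⟩ := Metric.eventually_nhds_iff.1 (hN.def hc)
  refine ⟨r / 2, half_pos hr, fun s hs => ?_⟩
  have := hball (show dist s 0 < r by rw [Real.dist_eq, sub_zero]; linarith)
  simpa only [Real.norm_eq_abs, abs_pow, sq_abs] using this

section Lipschitz

variable {N : ℝ → ℝ} {K : ℝ} {L : NNReal}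

theorem abs_map_add_sub_map_le (hL : LipschitzOnWith L N (Icc (-K) K)) {a b : ℝ}
    (hab : |a| + |b| ≤ K) : |N (a + b) - N b| ≤ L * |a| := by
  have hmem : ∀ s, |s| ≤ K → s ∈ Icc (-K) K := fun s hs => abs_le.1 hs
  simpa [Real.dist_eq] using hL.dist_le_mul (a + b) (hmem _ ((abs_add_le a b).trans hab))
    b (hmem _ (by linarith [abs_nonneg a]))

theorem abs_map_add_sub_map_sub_map_le {A B : ℝ}
    (hL : LipschitzOnWith L N (Icc (-(A + B)) (A + B))) (hN0 : N 0 = 0) {a b : ℝ} (ha : |a| ≤ A)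
    (hb : |b| ≤ B) : |N (a + b) - N a - N b| ≤ 2 * L * A := by
  have hNab := abs_map_add_sub_map_le hL (add_le_add ha hb)
  have hNa := abs_map_add_sub_map_le hL (a := a) (b := 0)
    (by rw [abs_zero, add_zero]; linarith [abs_nonneg b])
  rw [add_zero, hN0, sub_zero] at hNa
  have hLa : L * |a| ≤ L * A := mul_le_mul_of_nonneg_left ha L.coe_nonneg
  calc |N (a + b) - N a - N b| ≤ |N (a + b) - N b| + |N a| := by
        rw [show N (a + b) - N a - N b = (N (a + b) - N b) - N a by ring]
        exact abs_sub _ _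
    _ ≤ 2 * L * A := by linarith

theorem exists_abs_map_add_sub_map_sub_map_le (hN : N =o[𝓝 0] fun s => s ^ 2)
    (hL : LipschitzOnWith L N (Icc (-K) K)) {ε : ℝ} (hε : 0 < ε) :
    ∃ η > 0, ∃ M, ∀ a b, |a| ≤ η → |a| + |b| ≤ K →
      |N (a + b) - N a - N b| ≤ ε * (a ^ 2 + b ^ 2) + M * a ^ 2 := by
  obtain ⟨δ, hδ, hsmall⟩ := exists_abs_le_mul_sq_of_isLittleO hN (by positivity : 0 < ε / 3)
  obtain ⟨η, hη, rfl⟩ : ∃ η, 0 < η ∧ δ = 2 * η := ⟨δ / 2, half_pos hδ, by ring⟩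
  refine ⟨η, hη, ε / 3 + (L / η) ^ 2 / (4 * ε), fun a b ha hab => ?_⟩
  have hNa := hsmall a (by linarith)
  have hMa : 0 ≤ (L / η) ^ 2 / (4 * ε) * a ^ 2 := by positivity
  rcases le_or_gt |b| η with hb | hb
  · have hNab := hsmall (a + b) ((abs_add_le a b).trans (by linarith))
    have hNb := hsmall b (by linarith)
    have := abs_sub_le_iff.1 (abs_sub (N (a + b) - N a) (N b))
    rw [abs_le] at hNa hNab hNb ⊢
    constructor <;> nlinarith [sq_nonneg (a - b)]
  · -- now `|a| ≤ |a| |b| / η`, which turns the Lipschitz bound `L |a|` into a quadratic one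
    have hLa : L * |a| ≤ (L / η * |a|) * |b| := by
      rw [div_mul_eq_mul_div, div_mul_eq_mul_div, le_div_iff₀ hη]
      exact mul_le_mul_of_nonneg_left hb.le (by positivity)
    have hamgm := mul_le_mul_sq_add_sq_div (x := L / η * |a|) (y := |b|) hε
    rw [mul_pow, sq_abs, sq_abs] at hamgm
    calc |N (a + b) - N a - N b| ≤ |N (a + b) - N b| + |N a| := by
          rw [show N (a + b) - N a - N b = (N (a + b) - N b) - N a by ring]
          exact abs_sub _ _
      _ ≤ ε * (a ^ 2 + b ^ 2) + (ε / 3 + (L / η) ^ 2 / (4 * ε)) * a ^ 2 := by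
          have := abs_map_add_sub_map_le hL hab
          rw [show (L / η) ^ 2 * a ^ 2 / (4 * ε) = (L / η) ^ 2 / (4 * ε) * a ^ 2 by ring]
            at hamgm
          nlinarith [sq_nonneg a]

end Lipschitz

theorem eq_neg_integral_Ioi_of_hasDerivAt {f f' : ℝ → ℝ} {a : ℝ}
    (hf : ∀ t, HasDerivAt f (f' t) t) (hfi : IntegrableOn f (Ioi a))
    (hf'i : IntegrableOn f' (Ioi a)) :
    f a = -∫ t in Ioi a, f' t := by
  have hlim := tendsto_zero_of_hasDerivAt_of_integrableOn_Ioi (fun t _ => hf t) hf'i hfi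
  rw [integral_Ioi_of_hasDerivAt_of_tendsto' (fun t _ => hf t) hf'i hlim]
  ring

theorem sq_le_integral_sq_add_integral_sq_deriv {f f' : ℝ → ℝ}
    (hf : ∀ t, HasDerivAt f (f' t) t) (hf2 : MemLp f 2) (hf'2 : MemLp f' 2) (x : ℝ) :
    f x ^ 2 ≤ (∫ t, f t ^ 2) + ∫ t, f' t ^ 2 := by
  have hff' : Integrable (fun t => 2 * f t * f' t) := by
    simpa only [mul_assoc, Pi.mul_apply] using (hf2.integrable_mul hf'2).const_mul 2
  have hsq := hf2.integrable_sq
  have hsq' := hf'2.integrable_sq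
  calc f x ^ 2 = -∫ t in Ioi x, 2 * f t * f' t :=
        eq_neg_integral_Ioi_of_hasDerivAt (fun t => by simpa using (hf t).fun_pow 2)
          hsq.integrableOn hff'.integrableOn
    _ ≤ ∫ t in Ioi x, |2 * f t * f' t| := (neg_le_abs _).trans abs_integral_le_integral_abs
    _ ≤ ∫ t, |2 * f t * f' t| :=
        setIntegral_le_integral hff'.abs (.of_forall fun _ => abs_nonneg _)
    _ ≤ ∫ t, (f t ^ 2 + f' t ^ 2) := integral_mono hff'.abs (hsq.add hsq') fun t => by
        rw [abs_mul, abs_mul, abs_two]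
        nlinarith [sq_abs (f t), sq_abs (f' t), sq_nonneg (|f t| - |f' t|)]
    _ = (∫ t, f t ^ 2) + ∫ t, f' t ^ 2 := integral_add hsq hsq'

theorem tendsto_apply_of_weakly_tendsto_zero {w w' : ℕ → ℝ → ℝ}
    (hw : ∀ n t, HasDerivAt (w n) (w' n t) t) (hw2 : ∀ n, MemLp (w n) 2)
    (hw'2 : ∀ n, MemLp (w' n) 2)
    (hweak : ∀ φ : ℝ → ℝ, MemLp φ 2 → Tendsto (fun n => ∫ t, w n t * φ t) atTop (𝓝 0))
    (hweak' : ∀ φ : ℝ → ℝ, MemLp φ 2 → Tendsto (fun n => ∫ t, w' n t * φ t) atTop (𝓝 0))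
    (x : ℝ) : Tendsto (fun n => w n x) atTop (𝓝 0) := by
  set φ : ℝ → ℝ := (Ioi x).indicator fun t => Real.exp (x - t)
  have hexp : MemLp (fun t => Real.exp (x - t)) 2 (volume.restrict (Ioi x)) := by
    refine (memLp_two_iff_integrable_sq (by fun_prop)).2 ?_
    refine IntegrableOn.congr_fun ((exp_neg_integrableOn_Ioi x two_pos).const_mul
      (Real.exp (2 * x))) (fun t _ => ?_) measurableSet_Ioi
    rw [← Real.exp_add, ← Real.exp_nat_mul]; push_cast; ring_nf
  have hφ : MemLp φ 2 := (memLp_indicator_iff_restrict measurableSet_Ioi).2 hexp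
  have hpair : ∀ g : ℝ → ℝ, ∫ t, g t * φ t = ∫ t in Ioi x, g t * Real.exp (x - t) := fun g => by
    rw [← integral_indicator measurableSet_Ioi]
    congr 1; ext t
    by_cases ht : t ∈ Ioi x <;> simp [φ, ht]
  have hint : ∀ g : ℝ → ℝ, MemLp g 2 →
      IntegrableOn (fun t => g t * Real.exp (x - t)) (Ioi x) :=
    fun g hg => (hg.restrict _).integrable_mul hexp
  have hrepr : ∀ n, w n x = (∫ t, w n t * φ t) - ∫ t, w' n t * φ t := by
    intro n
    have hderiv : ∀ t, HasDerivAt (fun t => w n t * Real.exp (x - t))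
        (w' n t * Real.exp (x - t) - w n t * Real.exp (x - t)) t := fun t => by
      simpa [mul_neg, ← sub_eq_add_neg] using
        (hw n t).fun_mul ((hasDerivAt_id t).const_sub x).exp
    have := eq_neg_integral_Ioi_of_hasDerivAt hderiv (hint _ (hw2 n))
      ((hint _ (hw'2 n)).sub (hint _ (hw2 n)))
    rw [sub_self, Real.exp_zero, mul_one] at this
    rw [hpair, hpair, ← integral_sub (hint _ (hw2 n)) (hint _ (hw'2 n)), this, ← integral_neg]
    congr 1; ext t; ring
  simpa [← hrepr] using (hweak φ hφ).sub (hweak' φ hφ)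

section MeasureSpace

variable {α : Type*} [MeasurableSpace α] {μ : Measure α}

theorem exists_integral_sq_le_of_weakly_tendsto_zero {g : ℕ → α → ℝ} (hg : ∀ n, MemLp (g n) 2 μ)
    (hweak : ∀ φ : α → ℝ, MemLp φ 2 μ → Tendsto (fun n => ∫ x, g n x * φ x ∂μ) atTop (𝓝 0)) :
    ∃ B, ∀ n, ∫ x, g n x ^ 2 ∂μ ≤ B := by
  set G : ℕ → Lp ℝ 2 μ := fun n => (hg n).toLp (g n)
  have hinner : ∀ n (φ : Lp ℝ 2 μ), inner ℝ (G n) φ = ∫ x, g n x * φ x ∂μ := by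
    intro n φ
    rw [L2.inner_def]
    refine integral_congr_ae ?_
    filter_upwards [(hg n).coeFn_toLp] with x hx
    simp [G, hx, mul_comm]
  have hbdd : ∀ φ : Lp ℝ 2 μ, ∃ C, ∀ n, ‖innerSL ℝ (G n) φ‖ ≤ C := by
    intro φ
    have : Tendsto (fun n => innerSL ℝ (G n) φ) atTop (𝓝 0) := by
      simpa only [innerSL_apply_apply, hinner] using hweak φ (Lp.memLp φ)
    obtain ⟨C, hC⟩ := this.norm.bddAbove_range
    exact ⟨C, fun n => hC (mem_range_self n)⟩
  obtain ⟨C, hC⟩ := banach_steinhaus hbdd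
  refine ⟨C ^ 2, fun n => ?_⟩
  have hGn : ‖G n‖ ≤ C := by simpa only [innerSL_apply_norm] using hC n
  calc ∫ x, g n x ^ 2 ∂μ = ‖G n‖ ^ 2 := by
        rw [← real_inner_self_eq_norm_sq, hinner]
        refine integral_congr_ae ?_
        filter_upwards [(hg n).coeFn_toLp] with x hx
        rw [hx, sq]
    _ ≤ C ^ 2 := pow_le_pow_left₀ (norm_nonneg _) hGn 2

theorem MeasureTheory.MemLp.measure_le_abs_lt_top {u : α → ℝ} (hu : MemLp u 2 μ) {η : ℝ}
    (hη : 0 < η) : μ {x | η ≤ |u x|} < ⊤ := by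
  convert hu.meas_ge_lt_top two_ne_zero ENNReal.ofNat_ne_top
    (ε := η.toNNReal) (by simpa using hη) using 4 with x
  rw [Real.toNNReal_le_iff_le_coe, coe_nnnorm, Real.norm_eq_abs]

theorem MeasureTheory.MemLp.tendsto_setIntegral_abs_le_sq {u : α → ℝ} (hu : MemLp u 2 μ) :
    Tendsto (fun η => ∫ x in {x | |u x| ≤ η}, u x ^ 2 ∂μ) (𝓝[>] 0) (𝓝 0) := by
  have hmeas : ∀ η, NullMeasurableSet {x | |u x| ≤ η} μ := fun η =>
    nullMeasurableSet_le hu.aestronglyMeasurable.aemeasurable.abs aemeasurable_const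
  simp_rw [← integral_indicator₀ (hmeas _)]
  rw [show 𝓝 (0 : ℝ) = 𝓝 (∫ _, (0 : ℝ) ∂μ) by simp]
  refine tendsto_integral_filter_of_dominated_convergence (fun x => u x ^ 2)
    (.of_forall fun η => hu.integrable_sq.aestronglyMeasurable.indicator₀ (hmeas η))
    (.of_forall fun η => .of_forall fun x => ?_) hu.integrable_sq (.of_forall fun x => ?_)
  · by_cases hx : |u x| ≤ η <;> simp [Set.indicator, hx, sq_nonneg]
  · rcases eq_or_ne (u x) 0 with hx | hx
    · simp [Set.indicator, hx]
    · refine tendsto_const_nhds.congr' ?_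
      filter_upwards [nhdsWithin_le_nhds (eventually_lt_nhds (abs_pos.2 hx))] with η hη
      simp [Set.indicator, hη.not_ge]

theorem abs_setIntegral_le_of_abs_le_sq {f a b : α → ℝ} {T : Set α} (hT : NullMeasurableSet T μ)
    (hf : Integrable f μ) (ha : MemLp a 2 μ) (hb : MemLp b 2 μ) {ε M : ℝ} (hε : 0 ≤ ε)
    (hle : ∀ x ∈ T, |f x| ≤ ε * (a x ^ 2 + b x ^ 2) + M * a x ^ 2) :
    |∫ x in T, f x ∂μ|
      ≤ ε * ((∫ x, a x ^ 2 ∂μ) + ∫ x, b x ^ 2 ∂μ) + M * ∫ x in T, a x ^ 2 ∂μ := by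
  have ha2 := ha.integrable_sq
  have hb2 := hb.integrable_sq
  have hab2 : Integrable (fun x => a x ^ 2 + b x ^ 2) μ := ha2.add hb2
  calc |∫ x in T, f x ∂μ| ≤ ∫ x in T, |f x| ∂μ := abs_integral_le_integral_abs
    _ ≤ ∫ x in T, (ε * (a x ^ 2 + b x ^ 2) + M * a x ^ 2) ∂μ :=
        setIntegral_mono_on₀ hf.abs.integrableOn
          ((hab2.const_mul ε).add (ha2.const_mul M)).integrableOn hT hle
    _ = ε * ∫ x in T, (a x ^ 2 + b x ^ 2) ∂μ + M * ∫ x in T, a x ^ 2 ∂μ := by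
        rw [integral_add (hab2.const_mul ε).integrableOn (ha2.const_mul M).integrableOn,
          integral_const_mul, integral_const_mul]
    _ ≤ ε * ((∫ x, a x ^ 2 ∂μ) + ∫ x, b x ^ 2 ∂μ) + M * ∫ x in T, a x ^ 2 ∂μ := by
        rw [← integral_add ha2 hb2]
        gcongr
        · exact .of_forall fun x => by positivity
        · exact Measure.restrict_le_self

theorem tendsto_integral_map_add_sub_map_sub_map {N : ℝ → ℝ} (hN : ContDiff ℝ 1 N)
    (hN0 : N =o[𝓝 0] fun s => s ^ 2) {u : α → ℝ} {w : ℕ → α → ℝ} {Ku Kw B : ℝ}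
    (hu : MemLp u 2 μ) (hw : ∀ n, MemLp (w n) 2 μ) (hKu : ∀ x, |u x| ≤ Ku)
    (hKw : ∀ n x, |w n x| ≤ Kw) (hB : ∀ n, ∫ x, w n x ^ 2 ∂μ ≤ B)
    (hlim : ∀ x, Tendsto (fun n => w n x) atTop (𝓝 0))
    (hD : ∀ n, Integrable (fun x => N (u x + w n x) - N (u x) - N (w n x)) μ) :
    Tendsto (fun n => ∫ x, N (u x + w n x) - N (u x) - N (w n x) ∂μ) atTop (𝓝 0) := by
  set D : ℕ → α → ℝ := fun n x => N (u x + w n x) - N (u x) - N (w n x)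
  obtain ⟨L, hL⟩ := hN.contDiffOn.exists_lipschitzOnWith one_ne_zero (convex_Icc _ _)
    (isCompact_Icc (a := -(Ku + Kw)) (b := Ku + Kw))
  have hN00 : N 0 = 0 := by simpa using hN0.isBigO.eq_zero_imp.self_of_nhds
  have hDlim : ∀ x, Tendsto (fun n => D n x) atTop (𝓝 0) := fun x => by
    simpa [hN00] using ((hN.continuous.tendsto _).comp ((hlim x).const_add (u x))).sub_const
      (N (u x)) |>.sub ((hN.continuous.tendsto 0).comp (hlim x))
  refine tendsto_nhds_zero_of_eventually_abs_le_mul ((∫ x, u x ^ 2 ∂μ) + B + 2) fun ε hε => ?_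
  obtain ⟨η₀, hη₀, M, hM⟩ := exists_abs_map_add_sub_map_sub_map_le hN0 hL hε
  obtain ⟨η, hηη₀, hη, hsmall⟩ :
      ∃ η, η ≤ η₀ ∧ 0 < η ∧ M * ∫ x in {x | |u x| ≤ η}, u x ^ 2 ∂μ ≤ ε :=
    ((eventually_le_nhds hη₀).filter_mono nhdsWithin_le_nhds |>.and <|
      (eventually_mem_nhdsWithin (s := Ioi (0 : ℝ))).and <|
      (hu.tendsto_setIntegral_abs_le_sq.const_mul M).eventually
        (ge_mem_nhds (by simpa using hε))).exists
  set S := {x | η < |u x|}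
  have hS : NullMeasurableSet S μ :=
    nullMeasurableSet_lt aemeasurable_const hu.aestronglyMeasurable.aemeasurable.abs
  have hSfin : μ S < ⊤ :=
    (measure_mono fun x (hx : η < |u x|) => hx.le).trans_lt (hu.measure_le_abs_lt_top hη)
  have hlarge : Tendsto (fun n => ∫ x in S, D n x ∂μ) atTop (𝓝 0) := by
    simpa using tendsto_integral_of_dominated_convergence (μ := μ.restrict S)
      (fun _ => 2 * L * Ku) (fun n => (hD n).aestronglyMeasurable.restrict)
      (integrableOn_const hSfin.ne)
      (fun n => .of_forall fun x => abs_map_add_sub_map_sub_map_le hL hN00 (hKu x) (hKw n x))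
      (.of_forall hDlim)
  have hsmall_u : ∀ n, |∫ x in Sᶜ, D n x ∂μ| ≤ ε * ((∫ x, u x ^ 2 ∂μ) + B) + ε := by
    intro n
    have hle : ∀ x ∈ Sᶜ, |D n x| ≤ ε * (u x ^ 2 + w n x ^ 2) + M * u x ^ 2 := fun x hx =>
      hM _ _ ((not_lt.1 (show ¬η < |u x| from hx)).trans hηη₀) (add_le_add (hKu x) (hKw n x))
    refine (abs_setIntegral_le_of_abs_le_sq hS.compl (hD n) hu (hw n) hε.le hle).trans ?_
    rw [show Sᶜ = {x | |u x| ≤ η} by ext; simp [S]]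
    nlinarith [hB n]
  filter_upwards [(Metric.tendsto_nhds.1 hlarge) ε hε] with n hn
  rw [Real.dist_eq, sub_zero] at hn
  calc |∫ x, D n x ∂μ| = |(∫ x in S, D n x ∂μ) + ∫ x in Sᶜ, D n x ∂μ| := by
        rw [integral_add_compl₀ hS (hD n)]
    _ ≤ ε + (ε * ((∫ x, u x ^ 2 ∂μ) + B) + ε) :=
        (abs_add_le _ _).trans (by linarith [hsmall_u n])
    _ = ((∫ x, u x ^ 2 ∂μ) + B + 2) * ε := by ring

end MeasureSpace

theorem energy_add_sub_energy_sub_energy {W N u u'' v w w'' z : ℝ → ℝ}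
    (hWN : ∀ s, W s = s ^ 2 / 2 + N s) (hu : MemLp u 2) (hu'' : MemLp u'' 2) (hv : MemLp v 2)
    (hw : MemLp w 2) (hw'' : MemLp w'' 2) (hz : MemLp z 2) (hWu : Integrable fun x => W (u x))
    (hWw : Integrable fun x => W (w x)) (hWuw : Integrable fun x => W (u x + w x)) :
    energy W (fun x => u x + w x) (fun x => u'' x + w'' x) (fun x => v x + z x)
        - energy W u u'' v - energy W w w'' z
      = (∫ x, z x * v x) + (∫ x, w'' x * u'' x) + (∫ x, w x * u x)
        + ∫ x, N (u x + w x) - N (u x) - N (w x) := by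
  have hvu : Integrable fun x => v x ^ 2 + u'' x ^ 2 := hv.integrable_sq.add hu''.integrable_sq
  have hzw : Integrable fun x => z x ^ 2 + w'' x ^ 2 := hz.integrable_sq.add hw''.integrable_sq
  have hzv : Integrable fun x => z x * v x := hz.integrable_mul hv
  have hwu'' : Integrable fun x => w'' x * u'' x := hw''.integrable_mul hu''
  have hwu : Integrable fun x => w x * u x := hw.integrable_mul hu
  have hquad : ∫ x, ((v x + z x) ^ 2 + (u'' x + w'' x) ^ 2) = (∫ x, (v x ^ 2 + u'' x ^ 2))
      + (∫ x, (z x ^ 2 + w'' x ^ 2)) + 2 * ((∫ x, z x * v x) + ∫ x, w'' x * u'' x) := by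
    have hsq : Integrable fun x => v x ^ 2 + u'' x ^ 2 + (z x ^ 2 + w'' x ^ 2) := hvu.add hzw
    have hcross : Integrable fun x => 2 * (z x * v x + w'' x * u'' x) :=
      (hzv.add hwu'').const_mul 2
    rw [← integral_add hzv hwu'', ← integral_const_mul, ← integral_add hvu hzw,
      ← integral_add hsq hcross]
    congr 1; ext x; ring
  have hpot : ∫ x, W (u x + w x) = (∫ x, W (u x)) + (∫ x, W (w x)) + (∫ x, w x * u x)
      + ∫ x, N (u x + w x) - N (u x) - N (w x) := by
    have hN : Integrable fun x => N (u x + w x) - N (u x) - N (w x) :=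
      ((hWuw.sub hWu).sub hWw).sub hwu |>.congr
        (.of_forall fun x => by simp only [Pi.sub_apply, hWN]; ring)
    have h2 : Integrable fun x => W (u x) + W (w x) := hWu.add hWw
    have h3 : Integrable fun x => W (u x) + W (w x) + w x * u x := h2.add hwu
    rw [← integral_add hWu hWw, ← integral_add h2 hwu, ← integral_add h3 hN]
    congr 1; ext x; simp only [hWN]; ring
  simp only [energy]
  rw [hquad, hpot]
  ring

theorem momentum_add_sub_momentum_sub_momentum {u' v w' z : ℝ → ℝ} (hu' : MemLp u' 2)
    (hv : MemLp v 2) (hw' : MemLp w' 2) (hz : MemLp z 2) :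
    momentum (fun x => u' x + w' x) (fun x => v x + z x) - momentum u' v - momentum w' z
      = -((∫ x, w' x * v x) + ∫ x, z x * u' x) := by
  have hvu : Integrable fun x => v x * u' x := hv.integrable_mul hu'
  have hwv : Integrable fun x => w' x * v x := hw'.integrable_mul hv
  have hzu : Integrable fun x => z x * u' x := hz.integrable_mul hu'
  have hzw : Integrable fun x => z x * w' x := hz.integrable_mul hw'
  have hbilin : ∫ x, (v x + z x) * (u' x + w' x)
      = (∫ x, v x * u' x) + (∫ x, z x * w' x) + ((∫ x, w' x * v x) + ∫ x, z x * u' x) := by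
    have hdiag : Integrable fun x => v x * u' x + z x * w' x := hvu.add hzw
    have hoff : Integrable fun x => w' x * v x + z x * u' x := hwv.add hzu
    rw [← integral_add hwv hzu, ← integral_add hvu hzw, ← integral_add hdiag hoff]
    congr 1; ext x; ring
  simp only [momentum]
  rw [hbilin]
  ring

theorem energy_momentum_splitting_general (W : ℝ → ℝ) (hW : ContDiff ℝ 1 W)
    (hWii : (fun s => W s - s ^ 2 / 2) =o[nhds (0 : ℝ)] fun s => s ^ 2)
    (u u' u'' v : ℝ → ℝ) (hX : InX u u' u'' v)
    (hintu : Integrable (fun x => W (u x)))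
    (w w' w'' z : ℕ → ℝ → ℝ)
    (hXw : ∀ n, InX (w n) (w' n) (w'' n) (z n))
    (hintw : ∀ n, Integrable (fun x => W (w n x)))
    (hintuw : ∀ n, Integrable (fun x => W (u x + w n x)))
    -- weak convergence to 0 of `wₙ` in `H²(ℝ)`:
    (hweak0 : ∀ φ : ℝ → ℝ, MemLp φ 2 →
      Filter.Tendsto (fun n => ∫ x : ℝ, w n x * φ x) Filter.atTop (nhds 0))
    (hweak1 : ∀ φ : ℝ → ℝ, MemLp φ 2 →
      Filter.Tendsto (fun n => ∫ x : ℝ, w' n x * φ x) Filter.atTop (nhds 0))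
    (hweak2 : ∀ φ : ℝ → ℝ, MemLp φ 2 →
      Filter.Tendsto (fun n => ∫ x : ℝ, w'' n x * φ x) Filter.atTop (nhds 0))
    -- weak convergence to 0 of `zₙ` in `L²(ℝ)`:
    (hweakz : ∀ φ : ℝ → ℝ, MemLp φ 2 →
      Filter.Tendsto (fun n => ∫ x : ℝ, z n x * φ x) Filter.atTop (nhds 0)) :
    Filter.Tendsto (fun n =>
        energy W (fun x => u x + w n x) (fun x => u'' x + w'' n x) (fun x => v x + z n x)
          - energy W u u'' v - energy W (w n) (w'' n) (z n)) Filter.atTop (nhds 0) ∧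
    Filter.Tendsto (fun n =>
        momentum (fun x => u' x + w' n x) (fun x => v x + z n x)
          - momentum u' v - momentum (w' n) (z n)) Filter.atTop (nhds 0) := by
  obtain ⟨⟨hu, -, hu2, hu'2, hu''2⟩, hv2⟩ := hX
  simp only [InX, InH2, forall_and] at hXw
  obtain ⟨⟨hw, -, hw2, hw'2, hw''2⟩, hz2⟩ := hXw
  set N : ℝ → ℝ := fun s => W s - s ^ 2 / 2
  have hWN : ∀ s, W s = s ^ 2 / 2 + N s := fun s => by simp only [N]; ring
  obtain ⟨B, hB⟩ := exists_integral_sq_le_of_weakly_tendsto_zero hw2 hweak0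
  obtain ⟨B', hB'⟩ := exists_integral_sq_le_of_weakly_tendsto_zero hw'2 hweak1
  have hnonlin := tendsto_integral_map_add_sub_map_sub_map (hW.sub (by fun_prop)) hWii hu2 hw2
    (fun x => Real.abs_le_sqrt (sq_le_integral_sq_add_integral_sq_deriv hu hu2 hu'2 x))
    (fun n x => Real.abs_le_sqrt ((sq_le_integral_sq_add_integral_sq_deriv (hw n) (hw2 n)
      (hw'2 n) x).trans (add_le_add (hB n) (hB' n))))
    hB (tendsto_apply_of_weakly_tendsto_zero hw hw2 hw'2 hweak0 hweak1) fun n =>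
      (((hintuw n).sub hintu).sub (hintw n)).sub ((hw2 n).integrable_mul hu2) |>.congr
        (.of_forall fun x => by simp only [Pi.sub_apply, Pi.mul_apply, hWN]; ring)
  constructor
  · simp_rw [energy_add_sub_energy_sub_energy hWN hu2 hu''2 hv2 (hw2 _) (hw''2 _) (hz2 _) hintu
      (hintw _) (hintuw _)]
    simpa using (((hweakz v hv2).add (hweak2 u'' hu''2)).add (hweak0 u hu2)).add hnonlin
  · simp_rw [momentum_add_sub_momentum_sub_momentum hu'2 hv2 (hw'2 _) (hz2 _)]
    simpa using ((hweak1 v hv2).add (hweakz u' hu'2)).neg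

/-- Lemma 8 (splitting): assume `W ∈ C¹`, `W(s) = ½s² + N(s)` with `N(s) = o(s²)` at `0`,
and (W-i).  Let `𝐮 = (u,v) ∈ X` and let `𝐰ₙ = (wₙ,zₙ)` be a sequence in `X` converging
weakly to `0` (i.e. `wₙ ⇀ 0` in `H²(ℝ)` and `zₙ ⇀ 0` in `L²(ℝ)`).  Then
`E(𝐮+𝐰ₙ) − E(𝐮) − E(𝐰ₙ) → 0` and `C(𝐮+𝐰ₙ) − C(𝐮) − C(𝐰ₙ) → 0`. -/
theorem energy_momentum_splitting (W : ℝ → ℝ) (hW : ContDiff ℝ 1 W)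
    (hWii : (fun s => W s - s ^ 2 / 2) =o[nhds (0 : ℝ)] fun s => s ^ 2)
    (hWi : ∃ η : ℝ, 0 < η ∧ (∀ s : ℝ, |s| ≤ 1 → η * s ^ 2 ≤ W s) ∧
      (∀ s : ℝ, 1 ≤ |s| → η ≤ W s))
    (u u' u'' v : ℝ → ℝ) (hX : InX u u' u'' v)
    (hintu : Integrable (fun x => W (u x)))
    (w w' w'' z : ℕ → ℝ → ℝ)
    (hXw : ∀ n, InX (w n) (w' n) (w'' n) (z n))
    (hintw : ∀ n, Integrable (fun x => W (w n x)))
    (hintuw : ∀ n, Integrable (fun x => W (u x + w n x)))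
    -- weak convergence to 0 of `wₙ` in `H²(ℝ)`:
    (hweak0 : ∀ φ : ℝ → ℝ, MemLp φ 2 →
      Filter.Tendsto (fun n => ∫ x : ℝ, w n x * φ x) Filter.atTop (nhds 0))
    (hweak1 : ∀ φ : ℝ → ℝ, MemLp φ 2 →
      Filter.Tendsto (fun n => ∫ x : ℝ, w' n x * φ x) Filter.atTop (nhds 0))
    (hweak2 : ∀ φ : ℝ → ℝ, MemLp φ 2 →
      Filter.Tendsto (fun n => ∫ x : ℝ, w'' n x * φ x) Filter.atTop (nhds 0))
    -- weak convergence to 0 of `zₙ` in `L²(ℝ)`: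
    (hweakz : ∀ φ : ℝ → ℝ, MemLp φ 2 →
      Filter.Tendsto (fun n => ∫ x : ℝ, z n x * φ x) Filter.atTop (nhds 0)) :
    Filter.Tendsto (fun n =>
        energy W (fun x => u x + w n x) (fun x => u'' x + w'' n x) (fun x => v x + z n x)
          - energy W u u'' v - energy W (w n) (w'' n) (z n)) Filter.atTop (nhds 0) ∧
    Filter.Tendsto (fun n =>
        momentum (fun x => u' x + w' n x) (fun x => v x + z n x)
          - momentum u' v - momentum (w' n) (z n)) Filter.atTop (nhds 0) :=
  energy_momentum_splitting_general W hW hWii u u' u'' v hX hintu w w' w'' z hXw hintw hintuw hweak0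
    hweak1 hweak2 hweakz
end
end
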